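/- arXiv:1311.6852 — 3 statements merged into one kernel-verified Lean document; each statement's English description precedes it below -/
import Mathlib

section
/- Let H_A and H_B be finite-dimensional Hilbert spaces, ρ a density operator on H_A ⊗ H_B, and {Π_k^A ⊗ Π_k^B}_k a family of mutually orthogonal rank-one product projectors. Then for every k with Tr[ρ(Π_k^A ⊗ Π_k^B)] ≠ 0, the Hofer-Szabó–Vecsernyés screening-off condition Tr[ρ C_k A B C_k]·Tr[ρ C_k] = Tr[ρ C_k A C_k]·Tr[ρ C_k B C_k] holds for all commuting local observables A = A₀ ⊗ I and B = I ⊗ B₀, where C_k = Π_k^A ⊗ Π_k^B. In particular this holds for any state ρ, including entangled states. -/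
open Matrix Kronecker
open scoped ComplexOrder

def proj {n : Type*} [Fintype n] (v : n → ℂ) : Matrix n n ℂ :=
  Matrix.of fun i j => v i * star (v j)

/-!
A rank-one product projector `C = |a⟩⟨a| ⊗ |b⟩⟨b|` compresses every matrix to a multiple of
itself: `C M C = ⟨a ⊗ b, M (a ⊗ b)⟩ • C`, and for `M = A₀ ⊗ B₀` the scalar factorises as
`⟨a, A₀ a⟩ ⟨b, B₀ b⟩`. Hence `Tr[ρ C A B C] = α β Tr[ρ C]`, `Tr[ρ C A C] = α Tr[ρ C]` and
`Tr[ρ C B C] = β Tr[ρ C]`, and screening-off is the identity `(α β t) t = (α t) (β t)`,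
whatever the state `ρ`.
-/

section Compression

variable {l m n R : Type*} [Fintype m] [CommSemiring R]

theorem Matrix.vecMulVec_mul_mul_vecMulVec (u : l → R) (v w : m → R) (x : n → R)
    (M : Matrix m m R) :
    vecMulVec u v * M * vecMulVec w x = (v ⬝ᵥ M *ᵥ w) • vecMulVec u x := by
  rw [Matrix.mul_assoc, mul_vecMulVec, vecMulVec_mul_vecMulVec, vecMulVec_smul]

theorem trace_screeningOff_of_mul_mul_eq_smul [Fintype n] (ρ C A B : Matrix n n R) {α β : R}
    (hA : C * A * C = α • C) (hB : C * B * C = β • C) (hAB : C * A * B * C = (α * β) • C) :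
    (ρ * (C * A * B * C)).trace * (ρ * C).trace =
      (ρ * (C * A * C)).trace * (ρ * (C * B * C)).trace := by
  simp only [hA, hB, hAB, Matrix.mul_smul, trace_smul, smul_eq_mul]
  ring

end Compression

section Projector

variable {m n : Type*} [Fintype m] [Fintype n]

theorem proj_mul_mul_proj (v : n → ℂ) (M : Matrix n n ℂ) :
    proj v * M * proj v = (star v ⬝ᵥ M *ᵥ v) • proj v :=
  vecMulVec_mul_mul_vecMulVec v (star v) v (star v) M

theorem proj_kronecker_mul_mul_proj_kronecker (a : m → ℂ) (b : n → ℂ)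
    (M : Matrix m m ℂ) (N : Matrix n n ℂ) :
    (proj a ⊗ₖ proj b) * (M ⊗ₖ N) * (proj a ⊗ₖ proj b) =
      ((star a ⬝ᵥ M *ᵥ a) * (star b ⬝ᵥ N *ᵥ b)) • (proj a ⊗ₖ proj b) := by
  rw [← mul_kronecker_mul, ← mul_kronecker_mul, proj_mul_mul_proj, proj_mul_mul_proj,
    smul_kronecker, kronecker_smul, smul_smul]

end Projector

theorem stmt2_general {m n : ℕ} {K : Type*}
    (ρ : Matrix (Fin m × Fin n) (Fin m × Fin n) ℂ)
    (a : K → (Fin m → ℂ)) (b : K → (Fin n → ℂ))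
    (ha : ∀ k, ∑ i, star (a k i) * a k i = 1)
    (hb : ∀ k, ∑ j, star (b k j) * b k j = 1)
    (C : K → Matrix (Fin m × Fin n) (Fin m × Fin n) ℂ)
    (hC : ∀ k, C k = proj (a k) ⊗ₖ proj (b k)) :
    ∀ k, (ρ * C k).trace ≠ 0 →
      ∀ (A₀ : Matrix (Fin m) (Fin m) ℂ) (B₀ : Matrix (Fin n) (Fin n) ℂ)
        (A B : Matrix (Fin m × Fin n) (Fin m × Fin n) ℂ),
        A = A₀ ⊗ₖ (1 : Matrix (Fin n) (Fin n) ℂ) →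
        B = (1 : Matrix (Fin m) (Fin m) ℂ) ⊗ₖ B₀ →
        (ρ * (C k * A * B * C k)).trace * (ρ * C k).trace =
          (ρ * (C k * A * C k)).trace * (ρ * (C k * B * C k)).trace := by
  rintro k - A₀ B₀ A B rfl rfl
  have hCk := proj_kronecker_mul_mul_proj_kronecker (a k) (b k)
  have hnorm_a : star (a k) ⬝ᵥ 1 *ᵥ a k = 1 := by rw [one_mulVec]; exact ha k
  have hnorm_b : star (b k) ⬝ᵥ 1 *ᵥ b k = 1 := by rw [one_mulVec]; exact hb k
  apply trace_screeningOff_of_mul_mul_eq_smul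
  · rw [hC, hCk, hnorm_b, mul_one]
  · rw [hC, hCk, hnorm_a, one_mul]
  · rw [mul_assoc _ (A₀ ⊗ₖ 1), ← mul_kronecker_mul, Matrix.mul_one, Matrix.one_mul, hC, hCk]

/-- For any density operator ρ on H_A ⊗ H_B and a family of
mutually orthogonal rank-one product projectors C_k = |a_k⟩⟨a_k| ⊗ |b_k⟩⟨b_k|,
every C_k with Tr[ρ C_k] ≠ 0 satisfies the Hofer-Szabó–Vecsernyés screening-off
condition (in multiplicative form) for all commuting local observables
A = A₀ ⊗ I, B = I ⊗ B₀. -/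
theorem stmt2 {m n : ℕ} {K : Type*} [Fintype K]
    (ρ : Matrix (Fin m × Fin n) (Fin m × Fin n) ℂ)
    (hρ : ρ.PosSemidef) (hρtr : ρ.trace = 1)
    (a : K → (Fin m → ℂ)) (b : K → (Fin n → ℂ))
    (ha : ∀ k, ∑ i, star (a k i) * a k i = 1)
    (hb : ∀ k, ∑ j, star (b k j) * b k j = 1)
    (C : K → Matrix (Fin m × Fin n) (Fin m × Fin n) ℂ)
    (hC : ∀ k, C k = proj (a k) ⊗ₖ proj (b k))
    (horth : ∀ j k, j ≠ k → C j * C k = 0) :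
    ∀ k, (ρ * C k).trace ≠ 0 →
      ∀ (A₀ : Matrix (Fin m) (Fin m) ℂ) (B₀ : Matrix (Fin n) (Fin n) ℂ)
        (A B : Matrix (Fin m × Fin n) (Fin m × Fin n) ℂ),
        A = A₀ ⊗ₖ (1 : Matrix (Fin n) (Fin n) ℂ) →
        B = (1 : Matrix (Fin m) (Fin m) ℂ) ⊗ₖ B₀ →
        (ρ * (C k * A * B * C k)).trace * (ρ * C k).trace =
          (ρ * (C k * A * C k)).trace * (ρ * (C k * B * C k)).trace :=
  stmt2_general ρ a b ha hb C hC
end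

section
/- For any probability space with hidden variable λ taking values in a finite set Λ with distribution μ, and response functions giving probabilities P(a|x,λ) and P(b|y,λ) for binary outcomes a,b ∈ {-1,1} and binary settings x,y ∈ {0,1}, the CHSH quantity satisfies |E(0,0) + E(0,1) + E(1,0) − E(1,1)| ≤ 2, where E(x,y) := ∑_λ μ(λ) · (∑_a a·P(a|x,λ)) · (∑_b b·P(b|y,λ)). -/
open Finset


lemma chsh_pointwise (a0 a1 b0 b1 : ℝ)
    (ha0 : |a0| ≤ 1) (ha1 : |a1| ≤ 1) (hb0 : |b0| ≤ 1) (hb1 : |b1| ≤ 1) :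
    |a0 * b0 + a0 * b1 + a1 * b0 - a1 * b1| ≤ 2 := by
  have h : a0 * b0 + a0 * b1 + a1 * b0 - a1 * b1 = a0 * (b0 + b1) + a1 * (b0 - b1) := by ring
  rw [h]
  calc |a0 * (b0 + b1) + a1 * (b0 - b1)|
      ≤ |a0 * (b0 + b1)| + |a1 * (b0 - b1)| := abs_add_le _ _
    _ = |a0| * |b0 + b1| + |a1| * |b0 - b1| := by rw [abs_mul, abs_mul]
    _ ≤ 1 * |b0 + b1| + 1 * |b0 - b1| := by
        gcongr <;> positivity
    _ = |b0 + b1| + |b0 - b1| := by ring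
    _ ≤ 2 := by
        have h0 := abs_le.mp hb0
        have h1 := abs_le.mp hb1
        rcases abs_cases (b0 + b1) with ⟨e1, _⟩ | ⟨e1, _⟩ <;>
          rcases abs_cases (b0 - b1) with ⟨e2, _⟩ | ⟨e2, _⟩ <;>
            rw [e1, e2] <;> linarith [h0.1, h0.2, h1.1, h1.2]

/-- CHSH inequality for local hidden variable models. Outcomes are
indexed by `Bool` with value `val a = ±1`; settings x,y : Bool. -/
theorem stmt3 {Λ : Type*} [Fintype Λ]
    (μ : Λ → ℝ) (hμ0 : ∀ l, 0 ≤ μ l) (hμ1 : ∑ l, μ l = 1)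
    (pA pB : Bool → Λ → Bool → ℝ)
    (hA0 : ∀ x l a, 0 ≤ pA x l a) (hA1 : ∀ x l, ∑ a, pA x l a = 1)
    (hB0 : ∀ y l b, 0 ≤ pB y l b) (hB1 : ∀ y l, ∑ b, pB y l b = 1)
    (val : Bool → ℝ) (hval : val = fun a => if a then 1 else -1)
    (E : Bool → Bool → ℝ)
    (hE : ∀ x y, E x y =
      ∑ l, μ l * (∑ a, val a * pA x l a) * (∑ b, val b * pB y l b)) :
    |E false false + E false true + E true false - E true true| ≤ 2 := by
  set A : Bool → Λ → ℝ := fun x l => ∑ a, val a * pA x l a with hAdef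
  set B : Bool → Λ → ℝ := fun y l => ∑ b, val b * pB y l b with hBdef
  have hA : ∀ x l, |A x l| ≤ 1 := by
    intro x l
    have h1 := hA1 x l
    have h0t := hA0 x l true
    have h0f := hA0 x l false
    simp [Fintype.sum_bool] at h1
    simp [hAdef, Fintype.sum_bool, hval, abs_le]
    constructor <;> nlinarith
  have hB : ∀ y l, |B y l| ≤ 1 := by
    intro y l
    have h1 := hB1 y l
    have h0t := hB0 y l true
    have h0f := hB0 y l false
    simp [Fintype.sum_bool] at h1
    simp [hBdef, Fintype.sum_bool, hval, abs_le]
    constructor <;> nlinarith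
  have key : E false false + E false true + E true false - E true true =
      ∑ l, μ l * (A false l * B false l + A false l * B true l
        + A true l * B false l - A true l * B true l) := by
    simp only [hE]
    rw [← Finset.sum_add_distrib, ← Finset.sum_add_distrib, ← Finset.sum_sub_distrib]
    congr 1; ext l; ring
  rw [key]
  calc |∑ l, μ l * (A false l * B false l + A false l * B true l
        + A true l * B false l - A true l * B true l)|
      ≤ ∑ l, |μ l * (A false l * B false l + A false l * B true l
        + A true l * B false l - A true l * B true l)| := Finset.abs_sum_le_sum_abs _ _
    _ ≤ ∑ l, μ l * 2 := by
        apply Finset.sum_le_sum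
        intro l _
        rw [abs_mul, abs_of_nonneg (hμ0 l)]
        exact mul_le_mul_of_nonneg_left
          (chsh_pointwise _ _ _ _ (hA false l) (hA true l) (hB false l) (hB true l)) (hμ0 l)
    _ = 2 := by rw [← Finset.sum_mul, hμ1, one_mul]
end

section
/- (Tsirelson's bound) For any Hermitian operators A₀, A₁ on H_A and B₀, B₁ on H_B with A_x² = I and B_y² = I, and any state vector |ψ⟩ ∈ H_A ⊗ H_B, one has |⟨ψ| A₀⊗B₀ + A₀⊗B₁ + A₁⊗B₀ − A₁⊗B₁ |ψ⟩| ≤ 2√2. -/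
/-!
Put `aₓ = Aₓ ⊗ 1` and `b_y = 1 ⊗ B_y`: these are self-adjoint involutions in the C*-algebra of
matrices with the operator norm, and every `aₓ` commutes with every `b_y`. For such elements the
CHSH operator `S` is self-adjoint with `S² = 4 + [a₀, a₁][b₁, b₀]`, and each commutator has norm at
most `2`, so `‖S‖² = ‖S²‖ ≤ 8`. Finally `|⟨ψ, Sψ⟩| ≤ ‖S‖` for a unit vector `ψ`.
-/

open Matrix Kronecker
open scoped Matrix.Norms.L2Operator

def chsh {R : Type*} [Ring R] (a₀ a₁ b₀ b₁ : R) : R :=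
  a₀ * b₀ + a₀ * b₁ + a₁ * b₀ - a₁ * b₁

section Ring

variable {R : Type*} [Ring R] {a₀ a₁ b₀ b₁ : R}

theorem chsh_mul_self (ha₀ : a₀ * a₀ = 1) (ha₁ : a₁ * a₁ = 1) (hb₀ : b₀ * b₀ = 1)
    (hb₁ : b₁ * b₁ = 1) (h₀₀ : Commute a₀ b₀) (h₀₁ : Commute a₀ b₁) (h₁₀ : Commute a₁ b₀)
    (h₁₁ : Commute a₁ b₁) :
    chsh a₀ a₁ b₀ b₁ * chsh a₀ a₁ b₀ b₁ = 4 + (a₀ * a₁ - a₁ * a₀) * (b₁ * b₀ - b₀ * b₁) := by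
  have cancel : ∀ {x : R}, x * x = 1 → ∀ y, x * (x * y) = y := fun h y => by
    rw [← mul_assoc, h, one_mul]
  -- Move every `aₓ` to the left of every `b_y`, then cancel squares.
  simp only [chsh, mul_add, add_mul, mul_sub, sub_mul, mul_assoc, h₀₀.left_comm, h₀₁.left_comm,
    h₁₀.left_comm, h₁₁.left_comm, h₀₀.eq, h₀₁.eq, h₁₀.eq, h₁₁.eq, cancel hb₀, cancel hb₁,
    ha₀, ha₁]
  rw [show (4 : R) = 1 + 1 + 1 + 1 by norm_num]
  abel

theorem IsSelfAdjoint.chsh [StarRing R] (ha₀ : IsSelfAdjoint a₀) (ha₁ : IsSelfAdjoint a₁)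
    (hb₀ : IsSelfAdjoint b₀) (hb₁ : IsSelfAdjoint b₁) (h₀₀ : Commute a₀ b₀)
    (h₀₁ : Commute a₀ b₁) (h₁₀ : Commute a₁ b₀) (h₁₁ : Commute a₁ b₁) :
    IsSelfAdjoint (chsh a₀ a₁ b₀ b₁) := by
  rw [ha₀.commute_iff hb₀] at h₀₀
  rw [ha₀.commute_iff hb₁] at h₀₁
  rw [ha₁.commute_iff hb₀] at h₁₀
  rw [ha₁.commute_iff hb₁] at h₁₁
  exact ((h₀₀.add h₀₁).add h₁₀).sub h₁₁

end Ring

theorem norm_commutator_le {E : Type*} [NonUnitalNormedRing E] (a b : E) :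
    ‖a * b - b * a‖ ≤ 2 * (‖a‖ * ‖b‖) := by
  calc ‖a * b - b * a‖ ≤ ‖a * b‖ + ‖b * a‖ := norm_sub_le _ _
    _ ≤ ‖a‖ * ‖b‖ + ‖b‖ * ‖a‖ := add_le_add (norm_mul_le _ _) (norm_mul_le _ _)
    _ = 2 * (‖a‖ * ‖b‖) := by ring

section CStarRing

variable {E : Type*} [NormedRing E] [StarRing E] [CStarRing E]

theorem CStarRing.norm_one_le : ‖(1 : E)‖ ≤ 1 := by
  nontriviality E
  exact CStarRing.norm_one.le

theorem IsSelfAdjoint.norm_le_one_of_mul_self_eq_one {a : E} (ha : IsSelfAdjoint a)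
    (h : a * a = 1) : ‖a‖ ≤ 1 := by
  rw [← sq_le_one_iff₀ (norm_nonneg a), ← ha.norm_mul_self, h]
  exact CStarRing.norm_one_le

theorem norm_chsh_le {a₀ a₁ b₀ b₁ : E} (ha₀ : IsSelfAdjoint a₀) (ha₁ : IsSelfAdjoint a₁)
    (hb₀ : IsSelfAdjoint b₀) (hb₁ : IsSelfAdjoint b₁) (ha₀sq : a₀ * a₀ = 1)
    (ha₁sq : a₁ * a₁ = 1) (hb₀sq : b₀ * b₀ = 1) (hb₁sq : b₁ * b₁ = 1) (h₀₀ : Commute a₀ b₀)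
    (h₀₁ : Commute a₀ b₁) (h₁₀ : Commute a₁ b₀) (h₁₁ : Commute a₁ b₁) :
    ‖chsh a₀ a₁ b₀ b₁‖ ≤ 2 * √2 := by
  have hA : ‖a₀ * a₁ - a₁ * a₀‖ ≤ 2 := by
    grw [norm_commutator_le, ha₀.norm_le_one_of_mul_self_eq_one ha₀sq,
      ha₁.norm_le_one_of_mul_self_eq_one ha₁sq]
    norm_num
  have hB : ‖b₁ * b₀ - b₀ * b₁‖ ≤ 2 := by
    grw [norm_commutator_le, hb₀.norm_le_one_of_mul_self_eq_one hb₀sq,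
      hb₁.norm_le_one_of_mul_self_eq_one hb₁sq]
    norm_num
  have h4 : ‖(4 : E)‖ ≤ 4 := by
    simpa using (Nat.norm_cast_le (α := E) 4).trans
      (mul_le_of_le_one_right (by norm_num) CStarRing.norm_one_le)
  have hsq : ‖chsh a₀ a₁ b₀ b₁‖ ^ 2 ≤ (2 * √2) ^ 2 := by
    rw [← (ha₀.chsh ha₁ hb₀ hb₁ h₀₀ h₀₁ h₁₀ h₁₁).norm_mul_self,
      chsh_mul_self ha₀sq ha₁sq hb₀sq hb₁sq h₀₀ h₀₁ h₁₀ h₁₁, mul_pow, Real.sq_sqrt zero_le_two]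
    calc _ ≤ ‖(4 : E)‖ + ‖a₀ * a₁ - a₁ * a₀‖ * ‖b₁ * b₀ - b₀ * b₁‖ := by
          grw [norm_add_le, norm_mul_le]
      _ ≤ 4 + 2 * 2 := by gcongr
      _ = 2 ^ 2 * 2 := by norm_num
  exact (pow_le_pow_iff_left₀ (norm_nonneg _) (by positivity) two_ne_zero).mp hsq

end CStarRing

namespace Matrix

variable {R l m : Type*}

theorem IsHermitian.kronecker [CommRing R] [StarRing R] {A : Matrix l l R} {B : Matrix m m R}
    (hA : A.IsHermitian) (hB : B.IsHermitian) : (A ⊗ₖ B).IsHermitian := by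
  rw [IsHermitian, conjTranspose_kronecker, hA.eq, hB.eq]

variable [Fintype l] [Fintype m] [DecidableEq l] [DecidableEq m]

theorem kronecker_mul_self_eq_one [CommSemiring R] {A : Matrix l l R} {B : Matrix m m R}
    (hA : A * A = 1) (hB : B * B = 1) : A ⊗ₖ B * A ⊗ₖ B = 1 := by
  rw [← mul_kronecker_mul, hA, hB, one_kronecker_one]

theorem kronecker_one_mul_one_kronecker [CommSemiring R] (A : Matrix l l R) (B : Matrix m m R) :
    A ⊗ₖ (1 : Matrix m m R) * (1 : Matrix l l R) ⊗ₖ B = A ⊗ₖ B := by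
  rw [← mul_kronecker_mul, mul_one, one_mul]

theorem commute_kronecker_one_one_kronecker [CommSemiring R] (A : Matrix l l R)
    (B : Matrix m m R) : Commute (A ⊗ₖ (1 : Matrix m m R)) ((1 : Matrix l l R) ⊗ₖ B) := by
  rw [Commute, SemiconjBy, kronecker_one_mul_one_kronecker, ← mul_kronecker_mul, mul_one,
    one_mul]

theorem norm_star_dotProduct_mulVec_le {𝕜 : Type*} [RCLike 𝕜] (M : Matrix l l 𝕜) {ψ : l → 𝕜}
    (hψ : star ψ ⬝ᵥ ψ = 1) : ‖star ψ ⬝ᵥ M *ᵥ ψ‖ ≤ ‖M‖ := by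
  have hunit : ‖WithLp.toLp 2 ψ‖ = 1 := by
    have h := inner_self_eq_norm_sq_to_K (𝕜 := 𝕜) (WithLp.toLp 2 ψ)
    rw [EuclideanSpace.inner_toLp_toLp, dotProduct_comm, hψ] at h
    exact (pow_eq_one_iff_of_nonneg (norm_nonneg _) two_ne_zero).mp (by exact_mod_cast h.symm)
  calc ‖star ψ ⬝ᵥ M *ᵥ ψ‖ = ‖inner 𝕜 (WithLp.toLp 2 ψ) (WithLp.toLp 2 (M *ᵥ ψ))‖ := by
        rw [EuclideanSpace.inner_toLp_toLp, dotProduct_comm]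
    _ ≤ ‖WithLp.toLp 2 ψ‖ * ‖WithLp.toLp 2 (M *ᵥ ψ)‖ := norm_inner_le_norm _ _
    _ ≤ ‖M‖ := by
      rw [hunit, one_mul]
      exact (M.l2_opNorm_mulVec _).trans_eq (by rw [hunit, mul_one])

end Matrix

/-- Tsirelson's bound: for Hermitian involutions A₀, A₁ on H_A
and B₀, B₁ on H_B and any unit vector ψ ∈ H_A ⊗ H_B, the CHSH expectation is
bounded in absolute value by 2√2. -/
theorem stmt6 {m n : ℕ}
    (A₀ A₁ : Matrix (Fin m) (Fin m) ℂ) (B₀ B₁ : Matrix (Fin n) (Fin n) ℂ)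
    (hA₀ : A₀.IsHermitian) (hA₁ : A₁.IsHermitian)
    (hB₀ : B₀.IsHermitian) (hB₁ : B₁.IsHermitian)
    (hA₀sq : A₀ * A₀ = 1) (hA₁sq : A₁ * A₁ = 1)
    (hB₀sq : B₀ * B₀ = 1) (hB₁sq : B₁ * B₁ = 1)
    (ψ : Fin m × Fin n → ℂ) (hψ : ∑ p, star (ψ p) * ψ p = 1) :
    ‖(star ψ ⬝ᵥ
        ((A₀ ⊗ₖ B₀ + A₀ ⊗ₖ B₁ + A₁ ⊗ₖ B₀ - A₁ ⊗ₖ B₁).mulVec ψ))‖ ≤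
      2 * Real.sqrt 2 := by
  have hS : A₀ ⊗ₖ B₀ + A₀ ⊗ₖ B₁ + A₁ ⊗ₖ B₀ - A₁ ⊗ₖ B₁ =
      chsh (A₀ ⊗ₖ (1 : Matrix (Fin n) (Fin n) ℂ)) (A₁ ⊗ₖ 1)
        ((1 : Matrix (Fin m) (Fin m) ℂ) ⊗ₖ B₀) (1 ⊗ₖ B₁) := by
    simp only [chsh, kronecker_one_mul_one_kronecker]
  rw [hS]
  refine (norm_star_dotProduct_mulVec_le _ hψ).trans (norm_chsh_le
    (hA₀.kronecker isHermitian_one).isSelfAdjoint (hA₁.kronecker isHermitian_one).isSelfAdjoint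
    (isHermitian_one.kronecker hB₀).isSelfAdjoint (isHermitian_one.kronecker hB₁).isSelfAdjoint
    (kronecker_mul_self_eq_one hA₀sq (mul_one 1)) (kronecker_mul_self_eq_one hA₁sq (mul_one 1))
    (kronecker_mul_self_eq_one (mul_one 1) hB₀sq) (kronecker_mul_self_eq_one (mul_one 1) hB₁sq)
    (commute_kronecker_one_one_kronecker _ _) (commute_kronecker_one_one_kronecker _ _)
    (commute_kronecker_one_one_kronecker _ _) (commute_kronecker_one_one_kronecker _ _))
end
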